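/- For all a, b ∈ SH(n), the matrix α(a,b) := (a·b)·((b·a²·b)^{1/2})⁻¹ is unitary of determinant 1 (i.e. α(a,b) ∈ SU(n)), and the matrix product satisfies a·b = α(a,b)·m(a,b). (This exhibits (SL(n,ℂ), SU(n), SH(n)) as a quasi-double Lie group.) -/

import Mathlib

open Matrix ComplexOrder

/-- The set of `n × n` positive-definite Hermitian complex matrices of
determinant `1` (`Matrix.PosDef` includes Hermitian-ness). -/
def SH (n : ℕ) : Set (Matrix (Fin n) (Fin n) ℂ) :=
  {a | a.PosDef ∧ a.det = 1}

/-- The unique positive-semidefinite square root of a positive-semidefinite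
matrix (junk value `0` otherwise). -/
noncomputable def msqrt {n : ℕ} (p : Matrix (Fin n) (Fin n) ℂ) :
    Matrix (Fin n) (Fin n) ℂ :=
  letI := Classical.dec p.PosSemidef
  if h : p.PosSemidef then
    (h.1.eigenvectorUnitary : Matrix (Fin n) (Fin n) ℂ) *
      diagonal ((↑) ∘ Real.sqrt ∘ h.1.eigenvalues) *
      (star h.1.eigenvectorUnitary : Matrix (Fin n) (Fin n) ℂ)
  else 0

/-- The loop multiplication `m(a,b) := (b·a²·b)^{1/2}` on `SH n`. -/
noncomputable def mSH {n : ℕ} (a b : Matrix (Fin n) (Fin n) ℂ) :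
    Matrix (Fin n) (Fin n) ℂ :=
  msqrt (b * a ^ 2 * b)

/-! `α(a,b)` is the unitary factor in the polar decomposition of `g = a·b`: as `a` and `b` are
Hermitian, `gᴴ·g = b·a²·b`, so `m(a,b)` is the positive square root of `gᴴ·g`, hence
`g·m(a,b)⁻¹` is unitary, and `det m(a,b) = √(det (gᴴ·g)) = 1`. The needed facts about the
square root come from identifying `msqrt` with the continuous functional calculus `CFC.sqrt`. -/

open scoped MatrixOrder

lemma msqrt_eq_cfcSqrt {n : ℕ} {p : Matrix (Fin n) (Fin n) ℂ} (hp : p.PosSemidef) :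
    msqrt p = CFC.sqrt p := by
  rw [msqrt, dif_pos hp, CFC.sqrt_eq_cfc, cfc_nnreal_eq_real _ p hp.nonneg, hp.1.cfc_eq]
  simp [IsHermitian.cfc, Function.comp_def, max_eq_left (hp.eigenvalues_nonneg _)]

theorem Matrix.mul_nonsing_inv_mem_unitaryGroup {n R : Type*} [Fintype n] [DecidableEq n]
    [CommRing R] [StarRing R] {g s : Matrix n n R} (hs : s.IsHermitian)
    (hsq : s * s = gᴴ * g) (hdet : IsUnit s.det) : g * s⁻¹ ∈ unitaryGroup n R := by
  rw [mem_unitaryGroup_iff', star_eq_conjTranspose, conjTranspose_mul,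
    conjTranspose_nonsing_inv, hs.eq]
  calc s⁻¹ * gᴴ * (g * s⁻¹) = s⁻¹ * (s * s) * s⁻¹ := by rw [hsq]; simp only [mul_assoc]
    _ = 1 := by rw [← mul_assoc, nonsing_inv_mul _ hdet, one_mul, mul_nonsing_inv _ hdet]

/-- For all `a b ∈ SH n`, the matrix
`α(a,b) := (a·b)·((b·a²·b)^{1/2})⁻¹` is unitary of determinant `1`, and
`a·b = α(a,b)·m(a,b)`. (This exhibits `(SL(n,ℂ), SU(n), SH(n))` as a
quasi-double Lie group.) -/
theorem stmt_15 (n : ℕ) (a b : Matrix (Fin n) (Fin n) ℂ)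
    (ha : a ∈ SH n) (hb : b ∈ SH n) :
    (a * b) * (mSH a b)⁻¹ ∈ Matrix.unitaryGroup (Fin n) ℂ ∧
    ((a * b) * (mSH a b)⁻¹).det = 1 ∧
    a * b = ((a * b) * (mSH a b)⁻¹) * mSH a b := by
  obtain ⟨⟨haH, -⟩, ha1⟩ := ha
  obtain ⟨⟨hbH, -⟩, hb1⟩ := hb
  have hgram : (a * b)ᴴ * (a * b) = b * a ^ 2 * b := by
    rw [conjTranspose_mul, haH.eq, hbH.eq, sq]
    simp only [mul_assoc]
  have hpsd : (b * a ^ 2 * b).PosSemidef := hgram ▸ posSemidef_conjTranspose_mul_self (a * b)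
  have hm : mSH a b = CFC.sqrt (b * a ^ 2 * b) := msqrt_eq_cfcSqrt hpsd
  have hdet : (mSH a b).det = 1 := by
    rw [hm, hpsd.det_sqrt, det_mul, det_mul, det_pow, ha1, hb1]
    simp
  have hunit : IsUnit (mSH a b).det := hdet ▸ isUnit_one
  refine ⟨mul_nonsing_inv_mem_unitaryGroup ?_ ?_ hunit, ?_, ?_⟩
  · rw [hm]
    exact (CFC.sqrt_nonneg _).posSemidef.isHermitian
  · rw [hm, hgram]
    exact CFC.sqrt_mul_sqrt_self _ hpsd.nonneg
  · rw [det_mul, det_mul, det_nonsing_inv, hdet, ha1, hb1]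
    simp
  · rw [nonsing_inv_mul_cancel_right _ _ hunit]
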